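/- Let R > 0, θ ∈ (0, 2π), b ∈ ℂ with |b| = 1, and ζ ∈ ℂ \ {0} with ζ/b ∉ ℝ. Then the limit as s → 0⁺ of Log(sb)/ζ − ∫₀^∞ (1/(t(tb + ζ)))·( e^{iθ} q_s(t)/(1 − e^{iθ} q_s(t)) ) dt + ∫₀^∞ (1/(t(tb − ζ)))·( e^{−iθ} q_s(t)/(1 − e^{−iθ} q_s(t)) ) dt exists in ℂ. (The logarithmic divergences of the two correction integrals cancel the explicit Log(a)/ζ term as a = sb → 0, so the da-coefficient of d log X_m extends to the singular fiber of the Ooguri–Vafa space.) -/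

import Mathlib

/-!
Put `w = e^{iθ}`, `η = ζ / b`, `g₊(x) = w x / (1 - w x)` and `g₋(x) = w⁻¹ x / (1 - w⁻¹ x)`. Both are
Lipschitz on `[0, 1]` and vanish at `0`, and `g₊(1) + g₋(1) = -1`. The kernels are
`b⁻¹ / (t (t ± η))`. For `t > 1` they are `O(t⁻²)`, so dominated convergence applies as `q_s → 1`.
Near `t = 0` they are `± 1 / (ζ t)` plus a bounded term, so the divergence comes only from
`∫₀¹ g(q_s(t)) dt / t`. Since `q_s(t) = e^{-πRs/t} + O(s t)`, the substitution `t = s v` turns this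
into `∫₀^{1/s} g(e^{-πR/v}) dv / v + o(1)`, which is `-g(1) log s` plus a convergent integral
because `g(e^{-πR/v}) - g(1) = O(1/v)`. The two resulting multiples of `log s` add up to
`-log s / ζ`, which cancels the `log s` in `Log(s b) = log s + Log b`.
-/

open Complex Filter MeasureTheory Set Real Topology
open scoped NNReal

namespace OoguriVafa

lemma exp_neg_div_mem_Icc {c t : ℝ} (hc : 0 ≤ c) (ht : 0 ≤ t) :
    Real.exp (-(c / t)) ∈ Icc 0 1 :=
  ⟨(Real.exp_pos _).le, Real.exp_le_one_iff.2 (neg_nonpos.2 (div_nonneg hc ht))⟩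

lemma inv_mul_exp_neg_div_le {c t : ℝ} (hc : 0 < c) (ht : 0 < t) :
    t⁻¹ * Real.exp (-(c / t)) ≤ c⁻¹ := by
  have h := Real.mul_exp_neg_le_exp_neg_one (c / t)
  have h1 : Real.exp (-1) ≤ 1 := Real.exp_le_one_iff.2 (by norm_num)
  have : t⁻¹ * Real.exp (-(c / t)) = c⁻¹ * (c / t * Real.exp (-(c / t))) := by
    field_simp
  rw [this]
  exact mul_le_of_le_one_right (by positivity) (h.trans h1)

noncomputable def q (R s t : ℝ) : ℝ := Real.exp (-π * R * s * (t + 1 / t))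

lemma q_mem_Icc {R s t : ℝ} (hR : 0 ≤ R) (hs : 0 ≤ s) (ht : 0 ≤ t) : q R s t ∈ Icc 0 1 :=
  ⟨(Real.exp_pos _).le, Real.exp_le_one_iff.2 <| by
    have : 0 ≤ π * R * s * (t + 1 / t) := by positivity
    linarith⟩

lemma q_eq_exp_mul_exp (R s t : ℝ) :
    q R s t = Real.exp (-(π * R * s * t)) * Real.exp (-(π * R * s / t)) := by
  rw [q, ← Real.exp_add]; ring_nf

lemma continuousOn_q (R s : ℝ) : ContinuousOn (q R s) (Ioi 0) := by
  unfold q; fun_prop (disch := exact fun t ht => ne_of_gt ht)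

lemma q_le_exp_neg_div {R s t : ℝ} (hR : 0 ≤ R) (hs : 0 ≤ s) (ht : 0 ≤ t) :
    q R s t ≤ Real.exp (-(π * R * s / t)) := by
  rw [q_eq_exp_mul_exp]
  exact mul_le_of_le_one_left (Real.exp_pos _).le
    (Real.exp_le_one_iff.2 (neg_nonpos.2 (by positivity)))

lemma exp_neg_div_sub_q_le {R s t : ℝ} (hR : 0 ≤ R) (hs : 0 ≤ s) (ht : 0 ≤ t) :
    Real.exp (-(π * R * s / t)) - q R s t ≤ π * R * s * t := by
  have hst : 0 ≤ π * R * s * t := by positivity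
  have hy := exp_neg_div_mem_Icc (c := π * R * s) (by positivity) ht
  rw [q_eq_exp_mul_exp]
  calc Real.exp (-(π * R * s / t)) - Real.exp (-(π * R * s * t)) * Real.exp (-(π * R * s / t))
      = Real.exp (-(π * R * s / t)) * (1 - Real.exp (-(π * R * s * t))) := by ring
    _ ≤ 1 * (π * R * s * t) :=
        mul_le_mul hy.2 (by linarith [Real.one_sub_le_exp_neg (π * R * s * t)])
          (sub_nonneg.2 (Real.exp_le_one_iff.2 (neg_nonpos.2 hst))) zero_le_one
    _ = π * R * s * t := one_mul _

lemma integrableOn_Ioi_one_of_norm_le {E : Type*} [NormedAddCommGroup E] {f : ℝ → E} {C : ℝ}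
    (hf : ContinuousOn f (Ioi 1)) (hC : ∀ v ∈ Ioi (1 : ℝ), ‖f v‖ ≤ C * v ^ (-2 : ℝ)) :
    IntegrableOn f (Ioi 1) :=
  ((integrableOn_Ioi_rpow_of_lt (by norm_num) one_pos).const_mul C).mono'
    (hf.aestronglyMeasurable measurableSet_Ioi)
    ((ae_restrict_iff' measurableSet_Ioi).2 (ae_of_all _ hC))

section Lipschitz

variable {E : Type*} [NormedAddCommGroup E] {g : ℝ → E} {K : ℝ≥0}

lemma norm_le_of_lipschitzOnWith (hg : LipschitzOnWith K g (Icc 0 1)) (hg0 : g 0 = 0)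
    {x : ℝ} (hx : x ∈ Icc 0 1) : ‖g x‖ ≤ K * x := by
  simpa [hg0, dist_eq_norm, abs_of_nonneg hx.1] using
    hg.dist_le_mul x hx 0 ⟨le_rfl, zero_le_one⟩

lemma norm_sub_one_le_of_lipschitzOnWith (hg : LipschitzOnWith K g (Icc 0 1))
    {x : ℝ} (hx : x ∈ Icc 0 1) : ‖g x - g 1‖ ≤ K * (1 - x) := by
  simpa [dist_eq_norm, abs_of_nonpos (sub_nonpos.2 hx.2)] using
    hg.dist_le_mul x hx 1 ⟨zero_le_one, le_rfl⟩

lemma continuousOn_comp_exp_neg_div (hg : LipschitzOnWith K g (Icc 0 1)) {c : ℝ} (hc : 0 ≤ c) :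
    ContinuousOn (fun v => g (Real.exp (-(c / v)))) (Ioi 0) := by
  have hexp : ContinuousOn (fun v => Real.exp (-(c / v))) (Ioi 0) :=
    (continuousOn_const.div continuousOn_id fun v hv => ne_of_gt hv).neg.rexp
  exact hg.continuousOn.comp hexp fun v hv => exp_neg_div_mem_Icc hc (le_of_lt hv)

end Lipschitz

section Core

variable {E : Type*} [NormedAddCommGroup E] [NormedSpace ℝ E] {g : ℝ → E} {K : ℝ≥0}

lemma integrableOn_Ioc_inv_smul_comp (hg : LipschitzOnWith K g (Icc 0 1)) (hg0 : g 0 = 0)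
    {x : ℝ → ℝ} {c : ℝ} (hc : 0 < c) (hx : ContinuousOn x (Ioc 0 1))
    (hx0 : ∀ t ∈ Ioc (0 : ℝ) 1, 0 ≤ x t) (hxc : ∀ t ∈ Ioc (0 : ℝ) 1, x t ≤ Real.exp (-(c / t))) :
    IntegrableOn (fun t => t⁻¹ • g (x t)) (Ioc 0 1) := by
  have hx1 : ∀ t ∈ Ioc (0 : ℝ) 1, x t ∈ Icc 0 1 := fun t ht =>
    ⟨hx0 t ht, (hxc t ht).trans (exp_neg_div_mem_Icc hc.le ht.1.le).2⟩
  have hcont : ContinuousOn (fun t => t⁻¹ • g (x t)) (Ioc 0 1) :=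
    (continuousOn_inv₀.mono fun t ht => ht.1.ne').smul
      (hg.continuousOn.comp hx hx1)
  refine (integrableOn_const (C := (K * c⁻¹ : ℝ)) measure_Ioc_lt_top.ne).mono'
    (hcont.aestronglyMeasurable measurableSet_Ioc) ?_
  filter_upwards [ae_restrict_mem measurableSet_Ioc] with t ht
  rw [norm_smul, norm_inv, Real.norm_of_nonneg ht.1.le]
  calc t⁻¹ * ‖g (x t)‖ ≤ t⁻¹ * (K * Real.exp (-(c / t))) := by
        refine mul_le_mul_of_nonneg_left ?_ (inv_nonneg.2 ht.1.le)
        exact (norm_le_of_lipschitzOnWith hg hg0 (hx1 t ht)).trans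
          (mul_le_mul_of_nonneg_left (hxc t ht) K.2)
    _ = K * (t⁻¹ * Real.exp (-(c / t))) := by ring
    _ ≤ K * c⁻¹ := mul_le_mul_of_nonneg_left (inv_mul_exp_neg_div_le hc ht.1) K.2

lemma intervalIntegral_inv_smul_comp_exp_neg_mul_div {c s : ℝ} (hs : 0 < s) :
    ∫ t in (0 : ℝ)..1, t⁻¹ • g (Real.exp (-(c * s / t))) =
      ∫ v in (0 : ℝ)..s⁻¹, v⁻¹ • g (Real.exp (-(c / v))) := by
  have h : ∀ t : ℝ, t⁻¹ • g (Real.exp (-(c * s / t))) =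
      s⁻¹ • ((t / s)⁻¹ • g (Real.exp (-(c / (t / s))))) := by
    intro t
    rw [smul_smul, div_div_eq_mul_div, inv_div, ← div_eq_inv_mul, div_div_cancel_left' hs.ne']
  simp_rw [h, intervalIntegral.integral_smul, intervalIntegral.integral_comp_div
    (fun v => v⁻¹ • g (Real.exp (-(c / v)))) hs.ne', smul_smul, inv_mul_cancel₀ hs.ne', one_smul,
    zero_div, one_div]

lemma integrableOn_Ioi_inv_smul_comp_sub (hg : LipschitzOnWith K g (Icc 0 1)) {c : ℝ}
    (hc : 0 ≤ c) : IntegrableOn (fun v => v⁻¹ • (g (Real.exp (-(c / v))) - g 1)) (Ioi 1) := by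
  refine integrableOn_Ioi_one_of_norm_le (C := K * c)
    ((continuousOn_inv₀.mono fun v hv => (one_pos.trans hv).ne').smul
      (((continuousOn_comp_exp_neg_div hg hc).mono (Ioi_subset_Ioi zero_le_one)).sub
        continuousOn_const)) fun v hv => ?_
  have hv0 : 0 < v := one_pos.trans hv
  have he := exp_neg_div_mem_Icc hc hv0.le
  rw [norm_smul, norm_inv, Real.norm_of_nonneg hv0.le, Real.rpow_neg hv0.le, Real.rpow_two]
  calc v⁻¹ * ‖g (Real.exp (-(c / v))) - g 1‖ ≤ v⁻¹ * (K * (c / v)) := by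
        refine mul_le_mul_of_nonneg_left ((norm_sub_one_le_of_lipschitzOnWith hg he).trans
          (mul_le_mul_of_nonneg_left ?_ K.2)) (inv_nonneg.2 hv0.le)
        linarith [Real.one_sub_le_exp_neg (c / v)]
    _ = K * c * (v ^ 2)⁻¹ := by field_simp

lemma intervalIntegral_inv_smul_comp_sub_log_smul [CompleteSpace E]
    (hg : LipschitzOnWith K g (Icc 0 1)) (hg0 : g 0 = 0) {b c : ℝ} (hb : 0 < b) (hc : 0 < c) :
    (∫ v in (0 : ℝ)..b, v⁻¹ • g (Real.exp (-(c / v)))) - Real.log b • g 1 =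
      (∫ v in (0 : ℝ)..1, v⁻¹ • g (Real.exp (-(c / v)))) +
        ∫ v in (1 : ℝ)..b, v⁻¹ • (g (Real.exp (-(c / v))) - g 1) := by
  have hpos : uIcc 1 b ⊆ Ioi 0 := fun v hv =>
    lt_of_lt_of_le (lt_min one_pos hb) hv.1
  have h01 : IntervalIntegrable (fun v => v⁻¹ • g (Real.exp (-(c / v)))) volume 0 1 :=
    (intervalIntegrable_iff_integrableOn_Ioc_of_le zero_le_one).2 <|
      integrableOn_Ioc_inv_smul_comp hg hg0 hc (by fun_prop (disch := exact fun t ht => ht.1.ne'))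
        (fun _ _ => (Real.exp_pos _).le) fun _ _ => le_rfl
  have h1b : IntervalIntegrable (fun v => v⁻¹ • g (Real.exp (-(c / v)))) volume 1 b :=
    ((continuousOn_inv₀.mono fun v hv => ne_of_gt (hpos hv)).smul
      ((continuousOn_comp_exp_neg_div hg hc.le).mono hpos)).intervalIntegrable
  have hinv : IntervalIntegrable (fun v : ℝ => v⁻¹ • g 1) volume 1 b :=
    ((continuousOn_inv₀.mono fun v hv => ne_of_gt (hpos hv)).smul
      continuousOn_const).intervalIntegrable
  simp_rw [smul_sub]
  rw [intervalIntegral.integral_sub h1b hinv, intervalIntegral.integral_smul_const,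
    integral_inv_of_pos one_pos hb, div_one,
    ← intervalIntegral.integral_add_adjacent_intervals h01 h1b]
  abel

lemma norm_integral_inv_smul_sub_le (hg : LipschitzOnWith K g (Icc 0 1)) {R s : ℝ} (hR : 0 ≤ R)
    (hs : 0 ≤ s) :
    ‖∫ t in Ioc (0 : ℝ) 1, t⁻¹ • (g (q R s t) - g (Real.exp (-(π * R * s / t))))‖ ≤
      K * (π * R * s) := by
  refine (norm_setIntegral_le_of_norm_le_const measure_Ioc_lt_top fun t ht => ?_).trans_eq
    (by rw [volume_real_Ioc_of_le zero_le_one, sub_zero, mul_one])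
  have hq := q_mem_Icc hR hs ht.1.le
  have he := exp_neg_div_mem_Icc (c := π * R * s) (by positivity) ht.1.le
  have hdist : dist (q R s t) (Real.exp (-(π * R * s / t))) ≤ π * R * s * t := by
    rw [Real.dist_eq, abs_sub_comm, abs_of_nonneg (sub_nonneg.2 (q_le_exp_neg_div hR hs ht.1.le))]
    exact exp_neg_div_sub_q_le hR hs ht.1.le
  rw [norm_smul, norm_inv, Real.norm_of_nonneg ht.1.le, ← dist_eq_norm]
  calc t⁻¹ * dist (g (q R s t)) (g (Real.exp (-(π * R * s / t))))
      ≤ t⁻¹ * (K * (π * R * s * t)) :=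
        mul_le_mul_of_nonneg_left ((hg.dist_le_mul _ hq _ he).trans
          (mul_le_mul_of_nonneg_left hdist K.2)) (inv_nonneg.2 ht.1.le)
    _ = K * (π * R * s) := by field_simp [ht.1.ne']

lemma integrableOn_Ioc_inv_smul_comp_q (hg : LipschitzOnWith K g (Icc 0 1)) (hg0 : g 0 = 0)
    {R s : ℝ} (hR : 0 < R) (hs : 0 < s) : IntegrableOn (fun t => t⁻¹ • g (q R s t)) (Ioc 0 1) :=
  integrableOn_Ioc_inv_smul_comp hg hg0 (by positivity)
    ((continuousOn_q R s).mono Ioc_subset_Ioi_self) (fun _ _ => (Real.exp_pos _).le)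
    fun _ ht => q_le_exp_neg_div hR.le hs.le ht.1.le

lemma tendsto_integral_inv_smul_sub_exp_neg_div (hg : LipschitzOnWith K g (Icc 0 1)) {R : ℝ}
    (hR : 0 ≤ R) :
    Tendsto (fun s => ∫ t in Ioc (0 : ℝ) 1,
      t⁻¹ • (g (q R s t) - g (Real.exp (-(π * R * s / t))))) (𝓝[>] 0) (𝓝 0) := by
  refine squeeze_zero_norm' ?_ (?_ : Tendsto (fun s => (K : ℝ) * (π * R * s)) (𝓝[>] 0) (𝓝 0))
  · filter_upwards [self_mem_nhdsWithin] with s hs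
    exact norm_integral_inv_smul_sub_le hg hR (le_of_lt hs)
  · exact tendsto_nhdsWithin_of_tendsto_nhds (by
      simpa using ((continuous_const.mul continuous_id).tendsto (0 : ℝ)).const_mul (K : ℝ))

lemma integral_inv_smul_q_add_log_smul_eq [CompleteSpace E] (hg : LipschitzOnWith K g (Icc 0 1))
    (hg0 : g 0 = 0) {R s : ℝ} (hR : 0 < R) (hs : 0 < s) :
    (∫ t in Ioc (0 : ℝ) 1, t⁻¹ • g (q R s t)) + Real.log s • g 1 =
      (∫ t in Ioc (0 : ℝ) 1, t⁻¹ • (g (q R s t) - g (Real.exp (-(π * R * s / t))))) +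
        ((∫ v in (0 : ℝ)..1, v⁻¹ • g (Real.exp (-(π * R / v)))) +
          ∫ v in (1 : ℝ)..s⁻¹, v⁻¹ • (g (Real.exp (-(π * R / v))) - g 1)) := by
  have he : IntegrableOn (fun t => t⁻¹ • g (Real.exp (-(π * R * s / t)))) (Ioc 0 1) :=
    integrableOn_Ioc_inv_smul_comp hg hg0 (by positivity)
      (by fun_prop (disch := exact fun t ht => ht.1.ne')) (fun _ _ => (Real.exp_pos _).le)
      fun _ _ => le_rfl
  have hsplit : (∫ t in Ioc (0 : ℝ) 1, t⁻¹ • (g (q R s t) - g (Real.exp (-(π * R * s / t))))) =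
      (∫ t in Ioc (0 : ℝ) 1, t⁻¹ • g (q R s t)) -
        ∫ t in Ioc (0 : ℝ) 1, t⁻¹ • g (Real.exp (-(π * R * s / t))) := by
    simp_rw [smul_sub]
    exact integral_sub (integrableOn_Ioc_inv_smul_comp_q hg hg0 hR hs) he
  have hscale : (∫ t in Ioc (0 : ℝ) 1, t⁻¹ • g (Real.exp (-(π * R * s / t)))) =
      ∫ v in (0 : ℝ)..s⁻¹, v⁻¹ • g (Real.exp (-(π * R / v))) := by
    rw [← intervalIntegral.integral_of_le zero_le_one,
      intervalIntegral_inv_smul_comp_exp_neg_mul_div hs]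
  rw [hsplit, hscale, ← intervalIntegral_inv_smul_comp_sub_log_smul hg hg0 (inv_pos.2 hs)
    (by positivity), Real.log_inv, neg_smul]
  abel

theorem exists_tendsto_integral_inv_smul_q_add_log_smul [CompleteSpace E]
    (hg : LipschitzOnWith K g (Icc 0 1)) (hg0 : g 0 = 0) {R : ℝ} (hR : 0 < R) :
    ∃ L, Tendsto (fun s => (∫ t in Ioc (0 : ℝ) 1, t⁻¹ • g (q R s t)) + Real.log s • g 1)
      (𝓝[>] 0) (𝓝 L) := by
  have htail := intervalIntegral_tendsto_integral_Ioi 1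
    (integrableOn_Ioi_inv_smul_comp_sub hg (c := π * R) (by positivity)) tendsto_inv_nhdsGT_zero
  refine ⟨_, ((tendsto_integral_inv_smul_sub_exp_neg_div hg hR.le).add
    ((tendsto_const_nhds (x := ∫ v in (0 : ℝ)..1, v⁻¹ • g (Real.exp (-(π * R / v))))).add
      htail)).congr' ?_⟩
  filter_upwards [self_mem_nhdsWithin] with s (hs : 0 < s)
  exact (integral_inv_smul_q_add_log_smul_eq hg hg0 hR hs).symm

end Core

section Kernel

variable {g : ℝ → ℂ}

lemma tendsto_q_nhdsWithin_Icc {R t : ℝ} (hR : 0 ≤ R) (ht : 0 ≤ t) :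
    Tendsto (fun s => q R s t) (𝓝[>] 0) (𝓝[Icc 0 1] 1) := by
  have hcont : Continuous fun s => q R s t := by unfold q; fun_prop
  refine tendsto_nhdsWithin_iff.2 ⟨?_, ?_⟩
  · simpa [q] using (hcont.tendsto 0).mono_left nhdsWithin_le_nhds
  · filter_upwards [self_mem_nhdsWithin] with s hs using q_mem_Icc hR (le_of_lt hs) ht

lemma integrableOn_mul_comp_q {S : Set ℝ} (hS : MeasurableSet S) (hS0 : S ⊆ Ioi 0)
    {k : ℝ → ℂ} (hk : IntegrableOn k S) (hg : ContinuousOn g (Icc 0 1)) {R s : ℝ} (hR : 0 ≤ R)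
    (hs : 0 ≤ s) : IntegrableOn (fun t => k t * g (q R s t)) S := by
  obtain ⟨M, hM⟩ := isCompact_Icc.exists_bound_of_continuousOn hg
  refine hk.mul_bdd (c := M) ((hg.comp ((continuousOn_q R s).mono hS0) fun t ht =>
    q_mem_Icc hR hs (le_of_lt (hS0 ht))).aestronglyMeasurable hS) ?_
  filter_upwards [ae_restrict_mem hS] with t ht using hM _ (q_mem_Icc hR hs (le_of_lt (hS0 ht)))

lemma tendsto_integral_mul_comp_q {S : Set ℝ} (hS : MeasurableSet S) (hS0 : S ⊆ Ioi 0)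
    {k : ℝ → ℂ} (hk : IntegrableOn k S) (hg : ContinuousOn g (Icc 0 1)) {R : ℝ} (hR : 0 ≤ R) :
    Tendsto (fun s => ∫ t in S, k t * g (q R s t)) (𝓝[>] 0) (𝓝 (∫ t in S, k t * g 1)) := by
  obtain ⟨M, hM⟩ := isCompact_Icc.exists_bound_of_continuousOn hg
  refine tendsto_integral_filter_of_dominated_convergence (fun t => ‖k t‖ * M) ?_ ?_
    (hk.norm.mul_const M) ?_
  · filter_upwards [self_mem_nhdsWithin] with s hs
    exact (integrableOn_mul_comp_q hS hS0 hk hg hR (le_of_lt hs)).aestronglyMeasurable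
  · filter_upwards [self_mem_nhdsWithin] with s hs
    filter_upwards [ae_restrict_mem hS] with t ht
    rw [norm_mul]
    exact mul_le_mul_of_nonneg_left (hM _ (q_mem_Icc hR (le_of_lt hs) (le_of_lt (hS0 ht))))
      (norm_nonneg _)
  · filter_upwards [ae_restrict_mem hS] with t ht
    exact ((hg 1 ⟨zero_le_one, le_rfl⟩).tendsto.comp
      (tendsto_q_nhdsWithin_Icc hR (le_of_lt (hS0 ht)))).const_mul (k t)

lemma abs_im_le_norm_ofReal_add (η : ℂ) (t : ℝ) : |η.im| ≤ ‖(t : ℂ) + η‖ := by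
  simpa using Complex.abs_im_le_norm ((t : ℂ) + η)

lemma ofReal_add_ne_zero {η : ℂ} (hη : η.im ≠ 0) (t : ℝ) : (t : ℂ) + η ≠ 0 := fun h =>
  hη <| abs_nonpos_iff.1 <| by simpa [h] using abs_im_le_norm_ofReal_add η t

lemma integrableOn_Ioc_inv_ofReal_add {η : ℂ} (hη : η.im ≠ 0) :
    IntegrableOn (fun t : ℝ => ((t : ℂ) + η)⁻¹) (Ioc 0 1) :=
  ((by fun_prop : Continuous fun t : ℝ => (t : ℂ) + η).inv₀ (ofReal_add_ne_zero hη)).continuousOn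
    |>.integrableOn_Icc |>.mono_set Ioc_subset_Icc_self

lemma integrableOn_Ioi_one_div_mul_ofReal_add {η : ℂ} (hη : η.im ≠ 0) :
    IntegrableOn (fun t : ℝ => 1 / ((t : ℂ) * ((t : ℂ) + η))) (Ioi 1) := by
  have hβ : 0 < |η.im| := abs_pos.2 hη
  set C := 1 + ‖η‖ / |η.im|
  refine integrableOn_Ioi_one_of_norm_le (C := C) (ContinuousOn.div continuousOn_const
    (by fun_prop) fun t ht => mul_ne_zero (ofReal_ne_zero.2 (one_pos.trans ht).ne')
      (ofReal_add_ne_zero hη t)) fun t ht => ?_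
  have ht0 : 0 < t := one_pos.trans ht
  have hle : t / C ≤ ‖(t : ℂ) + η‖ := by
    have h1 : t ≤ ‖(t : ℂ) + η‖ + ‖η‖ := by
      simpa [abs_of_pos ht0] using norm_sub_le ((t : ℂ) + η) η
    have h2 : ‖η‖ ≤ ‖η‖ / |η.im| * ‖(t : ℂ) + η‖ := by
      rw [div_mul_eq_mul_div, le_div_iff₀ hβ]
      exact mul_le_mul_of_nonneg_left (abs_im_le_norm_ofReal_add η t) (norm_nonneg η)
    rw [div_le_iff₀ (by positivity)]
    linarith
  rw [norm_div, norm_one, norm_mul, Complex.norm_real, Real.norm_of_nonneg ht0.le,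
    Real.rpow_neg ht0.le, Real.rpow_two]
  calc 1 / (t * ‖(t : ℂ) + η‖) ≤ 1 / (t * (t / C)) :=
        one_div_le_one_div_of_le (by positivity) (mul_le_mul_of_nonneg_left hle ht0.le)
    _ = C * (t ^ 2)⁻¹ := by field_simp

lemma one_div_mul_mul_add_eq {b : ℂ} (hb : b ≠ 0) (x ζ : ℂ) :
    1 / (x * (x * b + ζ)) = b⁻¹ * (1 / (x * (x + ζ / b))) := by
  rw [one_div, one_div, ← mul_inv]
  congr 1
  field_simp

lemma one_div_mul_ofReal_add_mul {η : ℂ} (hη : η.im ≠ 0) {t : ℝ} (ht : t ≠ 0) (z : ℂ) :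
    1 / ((t : ℂ) * ((t : ℂ) + η)) * z = η⁻¹ * (t⁻¹ • z) - η⁻¹ * (((t : ℂ) + η)⁻¹ * z) := by
  have hη0 : η ≠ 0 := fun h => hη (by simp [h])
  have ht' : (t : ℂ) ≠ 0 := ofReal_ne_zero.2 ht
  have := ofReal_add_ne_zero hη t
  rw [Complex.real_smul, ofReal_inv]
  field_simp
  ring

theorem exists_tendsto_integral_one_div_mul_comp_q_add_log {K : ℝ≥0}
    (hg : LipschitzOnWith K g (Icc 0 1)) (hg0 : g 0 = 0) {R : ℝ} (hR : 0 < R) {η : ℂ}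
    (hη : η.im ≠ 0) :
    ∃ L, Tendsto (fun s => (∫ t in Ioi (0 : ℝ), 1 / ((t : ℂ) * ((t : ℂ) + η)) * g (q R s t)) +
      Real.log s * g 1 / η) (𝓝[>] 0) (𝓝 L) := by
  obtain ⟨L₀, h₀⟩ := exists_tendsto_integral_inv_smul_q_add_log_smul hg hg0 hR
  have h₁ := tendsto_integral_mul_comp_q measurableSet_Ioc Ioc_subset_Ioi_self
    (integrableOn_Ioc_inv_ofReal_add hη) hg.continuousOn hR.le
  have h₂ := tendsto_integral_mul_comp_q measurableSet_Ioi (Ioi_subset_Ioi zero_le_one)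
    (integrableOn_Ioi_one_div_mul_ofReal_add hη) hg.continuousOn hR.le
  refine ⟨_, (((h₀.const_mul η⁻¹).sub (h₁.const_mul η⁻¹)).add h₂).congr' ?_⟩
  filter_upwards [self_mem_nhdsWithin] with s (hs : 0 < s)
  have hinv := integrableOn_Ioc_inv_smul_comp_q hg hg0 hR hs
  have hadd := integrableOn_mul_comp_q measurableSet_Ioc Ioc_subset_Ioi_self
    (integrableOn_Ioc_inv_ofReal_add hη) hg.continuousOn hR.le hs.le
  have hIoc : (∫ t in Ioc (0 : ℝ) 1, 1 / ((t : ℂ) * ((t : ℂ) + η)) * g (q R s t)) =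
      η⁻¹ * (∫ t in Ioc (0 : ℝ) 1, t⁻¹ • g (q R s t)) -
        η⁻¹ * ∫ t in Ioc (0 : ℝ) 1, ((t : ℂ) + η)⁻¹ * g (q R s t) := by
    rw [setIntegral_congr_fun measurableSet_Ioc fun t ht =>
      one_div_mul_ofReal_add_mul hη ht.1.ne' (g (q R s t)),
      integral_sub (hinv.const_mul _) (hadd.const_mul _), integral_const_mul, integral_const_mul]
  have hIoi : IntegrableOn (fun t : ℝ => 1 / ((t : ℂ) * ((t : ℂ) + η)) * g (q R s t)) (Ioi 1) :=
    integrableOn_mul_comp_q measurableSet_Ioi (Ioi_subset_Ioi zero_le_one)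
      (integrableOn_Ioi_one_div_mul_ofReal_add hη) hg.continuousOn hR.le hs.le
  have hIoc' : IntegrableOn (fun t : ℝ => 1 / ((t : ℂ) * ((t : ℂ) + η)) * g (q R s t))
      (Ioc 0 1) :=
    IntegrableOn.congr_fun ((hinv.const_mul η⁻¹).sub (hadd.const_mul η⁻¹))
      (fun t ht => (one_div_mul_ofReal_add_mul hη ht.1.ne' _).symm) measurableSet_Ioc
  rw [← Ioc_union_Ioi_eq_Ioi zero_le_one, setIntegral_union Ioc_disjoint_Ioi_same
    measurableSet_Ioi hIoc' hIoi, hIoc, Complex.real_smul]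
  ring

end Kernel

noncomputable def geomTail (w : ℂ) (x : ℝ) : ℂ := w * x / (1 - w * x)

@[simp] lemma geomTail_zero (w : ℂ) : geomTail w 0 = 0 := by simp [geomTail]

lemma one_sub_mul_ofReal_ne_zero {w : ℂ} (hw : ‖w‖ ≤ 1) (hw1 : w ≠ 1) {x : ℝ}
    (hx : x ∈ Icc 0 1) : 1 - w * x ≠ 0 := by
  intro h
  have hwx : w * x = 1 := (sub_eq_zero.1 h).symm
  have hnorm : ‖w‖ * x = 1 := by
    simpa [abs_of_nonneg hx.1] using congrArg norm hwx
  have hx1 : x = 1 := by nlinarith [hx.2, mul_le_mul_of_nonneg_right hw hx.1]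
  exact hw1 (by simpa [hx1] using hwx)

lemma exists_lipschitzOnWith_geomTail {w : ℂ} (hw : ‖w‖ ≤ 1) (hw1 : w ≠ 1) :
    ∃ K, LipschitzOnWith K (geomTail w) (Icc 0 1) := by
  refine ContDiffOn.exists_lipschitzOnWith (n := 1) ?_ one_ne_zero (convex_Icc 0 1) isCompact_Icc
  have hlin : ContDiff ℝ 1 fun x : ℝ => w * (x : ℂ) := contDiff_const.mul ofRealCLM.contDiff
  unfold geomTail
  simp only [div_eq_mul_inv]
  exact hlin.contDiffOn.mul ((contDiff_const.sub hlin).contDiffOn.inv fun x hx =>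
    one_sub_mul_ofReal_ne_zero hw hw1 hx)

lemma geomTail_one_add_geomTail_inv_one {w : ℂ} (hw0 : w ≠ 0) (hw1 : w ≠ 1) :
    geomTail w 1 + geomTail w⁻¹ 1 = -1 := by
  have : 1 - w ≠ 0 := sub_ne_zero.2 (Ne.symm hw1)
  have : 1 - w⁻¹ ≠ 0 := sub_ne_zero.2 (by simpa [eq_comm] using hw1)
  simp only [geomTail, ofReal_one, mul_one]
  field_simp
  ring

lemma exp_ofReal_mul_I_ne_one {θ : ℝ} (hθ : θ ∈ Ioo 0 (2 * π)) : Complex.exp (θ * I) ≠ 1 := by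
  intro h
  obtain ⟨n, hn⟩ := Complex.exp_eq_one_iff.1 h
  have hθn : θ = n * (2 * π) := by simpa using congrArg Complex.im hn
  have h0 : (0 : ℝ) < n := by nlinarith [pi_pos, hθ.1]
  have h1 : (n : ℝ) < 1 := by nlinarith [pi_pos, hθ.2]
  norm_cast at h0 h1
  omega

end OoguriVafa

open OoguriVafa

theorem ov_da_part_limit_exists_general (R θ : ℝ) (b ζ : ℂ) (hR : 0 < R)
    (hθ : θ ∈ Set.Ioo 0 (2 * Real.pi))
    (hζb : ¬ ∃ r : ℝ, (r : ℂ) = ζ / b) :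
    ∃ L : ℂ, Tendsto (fun s : ℝ =>
        Complex.log ((s : ℂ) * b) / ζ -
        (∫ t in Set.Ioi (0:ℝ), (1 / ((t : ℂ) * ((t : ℂ) * b + ζ))) *
          (Complex.exp ((θ : ℂ) * I) * (Real.exp (-Real.pi * R * s * (t + 1 / t)) : ℂ) /
            (1 - Complex.exp ((θ : ℂ) * I) *
              (Real.exp (-Real.pi * R * s * (t + 1 / t)) : ℂ)))) +
        (∫ t in Set.Ioi (0:ℝ), (1 / ((t : ℂ) * ((t : ℂ) * b - ζ))) *
          (Complex.exp (-(θ : ℂ) * I) * (Real.exp (-Real.pi * R * s * (t + 1 / t)) : ℂ) /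
            (1 - Complex.exp (-(θ : ℂ) * I) *
              (Real.exp (-Real.pi * R * s * (t + 1 / t)) : ℂ)))))
      (nhdsWithin 0 (Set.Ioi 0)) (nhds L) := by
  set w := Complex.exp (θ * I)
  have hw : ‖w‖ = 1 := norm_exp_ofReal_mul_I θ
  have hw1 : w ≠ 1 := exp_ofReal_mul_I_ne_one hθ
  have hwinv : Complex.exp (-(θ : ℂ) * I) = w⁻¹ := by rw [neg_mul, Complex.exp_neg]
  have hη : (ζ / b).im ≠ 0 := fun h => hζb ⟨(ζ / b).re, Complex.ext (by simp) (by simp [h])⟩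
  have hb : b ≠ 0 := by rintro rfl; exact hζb ⟨0, by simp⟩
  obtain ⟨K₁, hK₁⟩ := exists_lipschitzOnWith_geomTail hw.le hw1
  obtain ⟨K₂, hK₂⟩ :=
    exists_lipschitzOnWith_geomTail (by rw [norm_inv, hw, inv_one]) (inv_ne_one.2 hw1)
  obtain ⟨L₁, h₁⟩ :=
    exists_tendsto_integral_one_div_mul_comp_q_add_log hK₁ (geomTail_zero w) hR hη
  obtain ⟨L₂, h₂⟩ := exists_tendsto_integral_one_div_mul_comp_q_add_log hK₂
    (geomTail_zero w⁻¹) hR (η := -ζ / b) (by simpa [neg_div] using hη)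
  refine ⟨Complex.log b / ζ - b⁻¹ * L₁ + b⁻¹ * L₂,
    ((tendsto_const_nhds.sub (h₁.const_mul b⁻¹)).add (h₂.const_mul b⁻¹)).congr' ?_⟩
  filter_upwards [self_mem_nhdsWithin] with s (hs : 0 < s)
  have hsum := geomTail_one_add_geomTail_inv_one (Complex.exp_ne_zero _) hw1
  set a₁ := geomTail w 1
  set a₂ := geomTail w⁻¹ 1
  simp only [sub_eq_add_neg _ ζ, one_div_mul_mul_add_eq hb, hwinv, mul_assoc b⁻¹,
    integral_const_mul, Complex.log_ofReal_mul hs hb, div_div_eq_mul_div, geomTail, q]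
  linear_combination (-(Real.log s : ℂ) / ζ * (a₁ + a₂)) * inv_mul_cancel₀ hb +
    (-(Real.log s : ℂ) / ζ) * hsum

/-- The logarithmic divergences of the two correction integrals cancel the explicit
`Log(a)/ζ` term as `a = sb → 0`, so the `da`-coefficient of `d log X_m` extends to the
singular fiber of the Ooguri–Vafa space: for `R > 0`, `θ ∈ (0, 2π)`, `|b| = 1`, `ζ ≠ 0`
with `ζ/b ∉ ℝ`, the limit as `s → 0⁺` of
`Log(sb)/ζ - ∫₀^∞ (1/(t(tb+ζ))) e^{iθ}q_s(t)/(1-e^{iθ}q_s(t)) dt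
          + ∫₀^∞ (1/(t(tb-ζ))) e^{-iθ}q_s(t)/(1-e^{-iθ}q_s(t)) dt`
exists in `ℂ`. -/
theorem ov_da_part_limit_exists (R θ : ℝ) (b ζ : ℂ) (hR : 0 < R)
    (hθ : θ ∈ Set.Ioo 0 (2 * Real.pi)) (hb : ‖b‖ = 1) (hζ : ζ ≠ 0)
    (hζb : ¬ ∃ r : ℝ, (r : ℂ) = ζ / b) :
    ∃ L : ℂ, Tendsto (fun s : ℝ =>
        Complex.log ((s : ℂ) * b) / ζ -
        (∫ t in Set.Ioi (0:ℝ), (1 / ((t : ℂ) * ((t : ℂ) * b + ζ))) *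
          (Complex.exp ((θ : ℂ) * I) * (Real.exp (-Real.pi * R * s * (t + 1 / t)) : ℂ) /
            (1 - Complex.exp ((θ : ℂ) * I) *
              (Real.exp (-Real.pi * R * s * (t + 1 / t)) : ℂ)))) +
        (∫ t in Set.Ioi (0:ℝ), (1 / ((t : ℂ) * ((t : ℂ) * b - ζ))) *
          (Complex.exp (-(θ : ℂ) * I) * (Real.exp (-Real.pi * R * s * (t + 1 / t)) : ℂ) /
            (1 - Complex.exp (-(θ : ℂ) * I) *
              (Real.exp (-Real.pi * R * s * (t + 1 / t)) : ℂ)))))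
      (nhdsWithin 0 (Set.Ioi 0)) (nhds L) :=
  ov_da_part_limit_exists_general R θ b ζ hR hθ hζb
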